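/- arXiv:1811.06831 — 2 statements merged into one kernel-verified Lean document; each statement's English description precedes it below -/
import Mathlib

section
/- Let {w_1,...,w_m} be a basis of R^m with sin θ_k ≥ (√2/3)^m for all k (θ_k the angle between w_k and the span of the other basis vectors), w̃_0 = Σ s_i w_i with |s_i| < 1/2, M > 0, and H(x) = M^2 - |w̃_0 + Σ x_i w_i|^2. Assume 2m|w_i| < M for all i, and set A_i = M/(m|w_i|) - 1/2. If y ∈ R^m satisfies |y_k| ≥ 2m(3/√2)^m A_k for some k, then H(y) < 0. -/
/-!
Write `w̃_0 + Σ yᵢ wᵢ = Σ aᵢ wᵢ` with `aᵢ = sᵢ + yᵢ`. Splitting off the `k`-th term, the rest lies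
in the span of the other basis vectors, so the angle bound gives `‖Σ aᵢ wᵢ‖ ≥ |a_k| (√2/3)^m ‖w_k‖`.
Since `|a_k| ≥ |y_k| - 1/2` and `|y_k|` is large, this exceeds `2M - m‖w_k‖ - ‖w_k‖/2 > M`.
-/

open Finset

section NormedSpace

variable {𝕜 E : Type*} [NormedField 𝕜] [SeminormedAddCommGroup E] [NormedSpace 𝕜 E]

theorem mul_le_norm_smul_add_of_mem {p : Submodule 𝕜 E} {x u : E} {r : ℝ}
    (hx : ∀ v ∈ p, r ≤ ‖x - v‖) (hu : u ∈ p) (a : 𝕜) : ‖a‖ * r ≤ ‖a • x + u‖ := by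
  rcases eq_or_ne a 0 with rfl | ha
  · simp
  have hdecomp : a • x + u = a • (x - (-a⁻¹) • u) := by
    rw [smul_sub, smul_smul, mul_neg, mul_inv_cancel₀ ha, neg_smul, one_smul, sub_neg_eq_add]
  rw [hdecomp, norm_smul]
  exact mul_le_mul_of_nonneg_left (hx _ (p.smul_mem _ hu)) (norm_nonneg a)

theorem mul_le_norm_sum_smul {ι : Type*} [Fintype ι] {w : ι → E} {k : ι} {r : ℝ}
    (hk : ∀ u ∈ Submodule.span 𝕜 (w '' {j | j ≠ k}), r ≤ ‖w k - u‖) (a : ι → 𝕜) :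
    ‖a k‖ * r ≤ ‖∑ i, a i • w i‖ := by
  classical
  rw [← add_sum_erase _ _ (mem_univ k)]
  refine mul_le_norm_smul_add_of_mem hk (Submodule.sum_mem _ fun i hi => ?_) _
  exact Submodule.smul_mem _ _ (Submodule.subset_span ⟨i, (mem_erase.mp hi).1, rfl⟩)

end NormedSpace

theorem sqrt_two_div_three_pow_le_one (m : ℕ) : (Real.sqrt 2 / 3) ^ m ≤ 1 := by
  refine pow_le_one₀ (by positivity) ((div_le_one (by norm_num)).mpr ?_)
  rw [Real.sqrt_le_left (by norm_num)]
  norm_num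

theorem lt_sub_half_mul_of_le {m B M c a : ℝ} (hm : 1 ≤ m) (hB : 0 < B) (hc : 0 < c)
    (hc1 : c ≤ 1) (hw : 2 * m * B < M) (ha : 2 * m * c⁻¹ * (M / (m * B) - 1 / 2) ≤ a) :
    M < (a - 1 / 2) * (c * B) := by
  have hmB : 0 < m * B := by positivity
  have hscaled : 2 * M - m * B ≤ a * (c * B) := by
    calc 2 * M - m * B = 2 * m * c⁻¹ * (M / (m * B) - 1 / 2) * (c * B) := by
          field_simp
      _ ≤ a * (c * B) := by gcongr
  have hcB : c * B ≤ m * B := by nlinarith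
  linarith

theorem stmt7_general (m : ℕ) (w : Fin m → EuclideanSpace ℝ (Fin m))
    (hli : LinearIndependent ℝ w)
    (hangle : ∀ k : Fin m, ∀ u ∈ Submodule.span ℝ (w '' {j | j ≠ k}),
      (Real.sqrt 2 / 3) ^ m * ‖w k‖ ≤ ‖w k - u‖)
    (s : Fin m → ℝ) (hs : ∀ i, |s i| < 1 / 2)
    (M : ℝ) (hw : ∀ i, 2 * m * ‖w i‖ < M)
    (y : Fin m → ℝ) (k : Fin m)
    (hy : 2 * m * (3 / Real.sqrt 2) ^ m * (M / (m * ‖w k‖) - 1 / 2) ≤ |y k|) :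
    M ^ 2 - ‖(∑ i, s i • w i) + ∑ i, y i • w i‖ ^ 2 < 0 := by
  set c := (Real.sqrt 2 / 3) ^ m
  have hsum : (∑ i, s i • w i) + ∑ i, y i • w i = ∑ i, (s i + y i) • w i := by
    simp only [add_smul, sum_add_distrib]
  have hcoeff : |y k| - 1 / 2 ≤ |s k + y k| := by
    have := abs_sub_abs_le_abs_sub (y k) (-s k)
    rw [abs_neg, sub_neg_eq_add, add_comm] at this
    linarith [hs k]
  have hM : M < (|y k| - 1 / 2) * (c * ‖w k‖) := by
    refine lt_sub_half_mul_of_le (Nat.one_le_cast.mpr k.pos) (norm_pos_iff.mpr (hli.ne_zero k))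
      (by positivity) (sqrt_two_div_three_pow_le_one m) (hw k) ?_
    rwa [← inv_div, inv_pow] at hy
  have hnorm : M < ‖(∑ i, s i • w i) + ∑ i, y i • w i‖ := by
    rw [hsum]
    calc M < (|y k| - 1 / 2) * (c * ‖w k‖) := hM
      _ ≤ |s k + y k| * (c * ‖w k‖) := by gcongr
      _ ≤ _ := mul_le_norm_sum_smul (hangle k) (fun i => s i + y i)
  have hM0 : 0 ≤ M := (mul_nonneg (by positivity) (norm_nonneg _)).trans (hw k).le
  exact sub_neg.mpr (pow_lt_pow_left₀ hnorm hM0 two_ne_zero)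

theorem stmt7 (m : ℕ) (hm : 1 ≤ m) (w : Fin m → EuclideanSpace ℝ (Fin m))
    (hli : LinearIndependent ℝ w)
    (hangle : ∀ k : Fin m, ∀ u ∈ Submodule.span ℝ (w '' {j | j ≠ k}),
      (Real.sqrt 2 / 3) ^ m * ‖w k‖ ≤ ‖w k - u‖)
    (s : Fin m → ℝ) (hs : ∀ i, |s i| < 1 / 2)
    (M : ℝ) (hM : 0 < M) (hw : ∀ i, 2 * m * ‖w i‖ < M)
    (y : Fin m → ℝ) (k : Fin m)
    (hy : 2 * m * (3 / Real.sqrt 2) ^ m * (M / (m * ‖w k‖) - 1 / 2) ≤ |y k|) :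
    M ^ 2 - ‖(∑ i, s i • w i) + ∑ i, y i • w i‖ ^ 2 < 0 :=
  stmt7_general m w hli hangle s hs M hw y k hy
end

section
/- For a 3/4-LLL reduced basis {v_1,...,v_d} of R^d, the angle θ_k between v_k and the linear span of the remaining basis vectors satisfies sin θ_k ≥ (√2/3)^d for every 1 ≤ k ≤ d. -/
open RealInnerProductSpace
open Finset

noncomputable def coefAux (k : ℕ) (M : ℕ → ℕ → ℝ) : ℕ → ℝ
  | j =>
    if j ≤ k then (if j = k then 1 else 0)
    else -(∑ i ∈ (Finset.range j).attach, coefAux k M i.1 * M j i.1)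
termination_by j => j
decreasing_by exact Finset.mem_range.mp i.2

lemma coefAux_def (k : ℕ) (M : ℕ → ℕ → ℝ) (j : ℕ) :
    coefAux k M j = if j ≤ k then (if j = k then 1 else 0)
      else -(∑ i ∈ Finset.range j, coefAux k M i * M j i) := by
  rw [coefAux]
  congr 1
  exact congrArg Neg.neg (Finset.sum_attach (Finset.range j) (fun i => coefAux k M i * M j i))

lemma coefAux_lt {k j : ℕ} (M : ℕ → ℕ → ℝ) (h : j < k) : coefAux k M j = 0 := by
  rw [coefAux_def, if_pos h.le, if_neg h.ne]

lemma coefAux_self (k : ℕ) (M : ℕ → ℕ → ℝ) : coefAux k M k = 1 := by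
  rw [coefAux_def, if_pos le_rfl, if_pos rfl]

lemma coefAux_gt {k j : ℕ} (M : ℕ → ℕ → ℝ) (h : k < j) :
    coefAux k M j = -(∑ i ∈ Finset.range j, coefAux k M i * M j i) := by
  rw [coefAux_def, if_neg (by omega)]

lemma coefAux_abs_le (k : ℕ) (M : ℕ → ℕ → ℝ) (hM : ∀ j i, i < j → |M j i| ≤ 1/2) :
    ∀ j, k < j → |coefAux k M j| ≤ 1/2 * (3/2 : ℝ)^(j - k - 1) := by
  intro j
  induction j using Nat.strong_induction_on with
  | _ j ih =>
    intro hkj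
    rw [coefAux_gt M hkj, abs_neg]
    have h1 : |∑ i ∈ Finset.range j, coefAux k M i * M j i|
        ≤ ∑ i ∈ Finset.range j, |coefAux k M i| * (1/2) := by
      refine (Finset.abs_sum_le_sum_abs _ _).trans (Finset.sum_le_sum ?_)
      intro i hi
      rw [abs_mul]
      exact mul_le_mul_of_nonneg_left (hM j i (Finset.mem_range.mp hi)) (abs_nonneg _)
    refine h1.trans ?_
    rw [← Finset.sum_range_add_sum_Ico _ (show k+1 ≤ j by omega), Finset.sum_range_succ]
    have h2 : ∑ i ∈ Finset.range k, |coefAux k M i| * (1/2) = 0 :=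
      Finset.sum_eq_zero fun i hi => by
        rw [coefAux_lt M (Finset.mem_range.mp hi), abs_zero, zero_mul]
    have h3 : ∑ i ∈ Finset.Ico (k+1) j, |coefAux k M i| * (1/2)
        ≤ ∑ t ∈ Finset.range (j - (k+1)), (1/2) * (3/2:ℝ)^t * (1/2) := by
      rw [Finset.sum_Ico_eq_sum_range]
      refine Finset.sum_le_sum fun t ht => ?_
      have ht' : k + 1 + t < j := by
        have := Finset.mem_range.mp ht; omega
      have := ih (k+1+t) ht' (by omega)
      have he : k + 1 + t - k - 1 = t := by omega
      rw [he] at this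
      exact mul_le_mul_of_nonneg_right this (by norm_num)
    have h4 : ∑ t ∈ Finset.range (j - (k+1)), (1/2) * (3/2:ℝ)^t * (1/2)
        = ((3/2:ℝ)^(j-k-1) - 1) / 2 := by
      have : ∀ t, (1/2) * (3/2:ℝ)^t * (1/2) = (1/4) * (3/2)^t := fun t => by ring
      simp_rw [this]
      rw [← Finset.mul_sum, geom_sum_eq (by norm_num)]
      have : j - (k+1) = j - k - 1 := by omega
      rw [this]; ring
    rw [h2, coefAux_self, abs_one, zero_add, one_mul]
    have h5 : (1:ℝ) ≤ (3/2:ℝ)^(j-k-1) := one_le_pow₀ (by norm_num)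
    nlinarith [h3.trans_eq h4]

section GSfacts

variable {d : ℕ} [NeZero d] (v : Fin d → EuclideanSpace ℝ (Fin d))

noncomputable def GS (v : Fin d → EuclideanSpace ℝ (Fin d)) :
    Fin d → EuclideanSpace ℝ (Fin d) :=
  @InnerProductSpace.gramSchmidt ℝ _ _ _ _ (Fin d) _ _ (inferInstance : WellFoundedLT (Fin d)) v

lemma GS_orth {i j : Fin d} (h : i ≠ j) : ⟪GS v i, GS v j⟫ = 0 :=
  @InnerProductSpace.gramSchmidt_orthogonal ℝ _ _ _ _ (Fin d) _ _
    (inferInstance : WellFoundedLT (Fin d)) v i j h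

lemma GS_ne_zero (hli : LinearIndependent ℝ v) (i : Fin d) : GS v i ≠ 0 :=
  @InnerProductSpace.gramSchmidt_ne_zero ℝ _ _ _ _ (Fin d) _ _
    (inferInstance : WellFoundedLT (Fin d)) v i hli

lemma GS_tri {i j : Fin d} (h : i < j) : ⟪GS v j, v i⟫ = 0 :=
  @InnerProductSpace.gramSchmidt_inv_triangular ℝ _ _ _ _ (Fin d) _ _
    (inferInstance : WellFoundedLT (Fin d)) v i j h

lemma GS_expand (n : Fin d) : v n = GS v n + ∑ i ∈ Finset.Iio n,
    (⟪GS v i, v n⟫ / (‖GS v i‖:ℝ)^2) • GS v i :=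
  @InnerProductSpace.gramSchmidt_def'' ℝ _ _ _ _ (Fin d) _ _
    (inferInstance : WellFoundedLT (Fin d)) v n

end GSfacts

set_option maxHeartbeats 1000000 in
theorem stmt8 (d : ℕ) [NeZero d] (v : Fin d → EuclideanSpace ℝ (Fin d))
    (hli : LinearIndependent ℝ v)
    (hspan : Submodule.span ℝ (Set.range v) = ⊤) :
    let gs : Fin d → EuclideanSpace ℝ (Fin d) :=
      @InnerProductSpace.gramSchmidt ℝ _ _ _ _ (Fin d) _ _ (inferInstance : WellFoundedLT (Fin d)) v
    let μ : Fin d → Fin d → ℝ := fun i j => ⟪v i, gs j⟫ / ⟪gs j, gs j⟫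
    (∀ i j : Fin d, j < i → |μ i j| ≤ 1 / 2) →
    (∀ i : ℕ, (hi : i + 1 < d) →
      3 / 4 * ‖gs ⟨i, by omega⟩‖ ^ 2 ≤
        ‖μ ⟨i + 1, hi⟩ ⟨i, by omega⟩ • gs ⟨i, by omega⟩ + gs ⟨i + 1, hi⟩‖ ^ 2) →
    ∀ k : Fin d, ∀ u ∈ Submodule.span ℝ (v '' {j | j ≠ k}),
      (Real.sqrt 2 / 3) ^ d * ‖v k‖ ≤ ‖v k - u‖ := by
  intro gs μ hμraw hlllraw k u hu
  -- restated hypotheses, avoiding the lets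
  have hμ : ∀ i j : Fin d, j < i → |⟪v i, gs j⟫ / ⟪gs j, gs j⟫| ≤ 1 / 2 := hμraw
  have hlll : ∀ i : ℕ, (hi : i + 1 < d) → ∀ (hi' : i < d),
      3 / 4 * ‖gs ⟨i, hi'⟩‖ ^ 2 ≤
        ‖(⟪v ⟨i+1, hi⟩, gs ⟨i, hi'⟩⟫ / ⟪gs ⟨i, hi'⟩, gs ⟨i, hi'⟩⟫) • gs ⟨i, hi'⟩
          + gs ⟨i + 1, hi⟩‖ ^ 2 := fun i hi hi' => hlllraw i hi
  -- basic Gram-Schmidt facts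
  have horth : ∀ i j : Fin d, i ≠ j → ⟪gs i, gs j⟫ = 0 := fun i j h => GS_orth v h
  have hne : ∀ i : Fin d, gs i ≠ 0 := fun i => GS_ne_zero v hli i
  have hpos : ∀ i : Fin d, (0:ℝ) < ⟪gs i, gs i⟫ := fun i => by
    rw [real_inner_self_eq_norm_sq]
    exact pow_pos (norm_pos_iff.mpr (hne i)) 2
  have htri : ∀ i j : Fin d, i < j → ⟪v i, gs j⟫ = 0 := fun i j h => by
    rw [real_inner_comm]; exact GS_tri v h
  have hexp : ∀ j : Fin d, v j = gs j + ∑ i ∈ Finset.Iio j,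
      (⟪gs i, v j⟫ / (‖gs i‖:ℝ)^2) • gs i := fun j => GS_expand v j
  have hself : ∀ j : Fin d, ⟪v j, gs j⟫ = ⟪gs j, gs j⟫ := by
    intro j
    conv_lhs => rw [hexp j]
    rw [inner_add_left, sum_inner]
    rw [Finset.sum_eq_zero, add_zero]
    intro i hi
    rw [real_inner_smul_left, horth i j (Finset.mem_Iio.mp hi).ne, mul_zero]
  -- linearity facts
  have hinnersum : ∀ (x : EuclideanSpace ℝ (Fin d)) (c : Fin d → ℝ),
      ⟪x, ∑ i : Fin d, c i • gs i⟫ = ∑ i : Fin d, c i * ⟪x, gs i⟫ := by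
    intro x c
    rw [inner_sum]
    simp_rw [real_inner_smul_right]
  have hnormsum : ∀ c : Fin d → ℝ,
      ‖∑ i : Fin d, c i • gs i‖^2 = ∑ i : Fin d, (c i)^2 * ‖gs i‖^2 := by
    intro c
    rw [← real_inner_self_eq_norm_sq, sum_inner]
    refine Finset.sum_congr rfl fun i _ => ?_
    rw [real_inner_smul_left, hinnersum]
    rw [Finset.sum_eq_single i]
    · rw [real_inner_self_eq_norm_sq]; ring
    · intro j _ hj
      rw [horth i j (Ne.symm hj), mul_zero]
    · intro h; exact absurd (Finset.mem_univ i) h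
  -- ℕ-indexed data
  obtain ⟨Gn, hGndef⟩ : ∃ F : ℕ → ℝ, F = fun i =>
      if h : i < d then ‖gs ⟨i, h⟩‖^2 else 1 := ⟨_, rfl⟩
  obtain ⟨MU, hMUdef⟩ : ∃ F : ℕ → ℕ → ℝ, F = fun j i =>
      if hj : j < d then if hi : i < d then
        ⟪v ⟨j, hj⟩, gs ⟨i, hi⟩⟫ / ⟪gs ⟨i, hi⟩, gs ⟨i, hi⟩⟫ else 0 else 0 := ⟨_, rfl⟩
  have hGn : ∀ (i : ℕ) (h : i < d), ‖gs ⟨i, h⟩‖^2 = Gn i := by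
    intro i h; rw [hGndef]; simp [h]
  have hGn' : ∀ i : Fin d, ‖gs i‖^2 = Gn i.1 := fun i => hGn i.1 i.2
  have hGnpos : ∀ i : ℕ, 0 < Gn i := by
    intro i
    by_cases h : i < d
    · rw [← hGn i h]; exact pow_pos (norm_pos_iff.mpr (hne _)) 2
    · rw [hGndef]; simp [h]
  have hip : ∀ i : Fin d, ⟪gs i, gs i⟫ = Gn i.1 := fun i => by
    rw [real_inner_self_eq_norm_sq]; exact hGn' i
  have hMU : ∀ j i : Fin d, MU j.1 i.1 = ⟪v j, gs i⟫ / ⟪gs i, gs i⟫ := by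
    intro j i; rw [hMUdef]; simp [j.2, i.2]
  have hMUz : ∀ j i : Fin d, j < i → MU j.1 i.1 = 0 := fun j i h => by
    rw [hMU j i, htri j i h, zero_div]
  have hMUself : ∀ j : Fin d, MU j.1 j.1 = 1 := fun j => by
    rw [hMU j j, hself j, div_self (hpos j).ne']
  have hMUb : ∀ j i : ℕ, i < j → |MU j i| ≤ 1/2 := by
    intro j i h
    by_cases hj : j < d
    · have hi : i < d := by omega
      have := hμ ⟨j, hj⟩ ⟨i, hi⟩ (by exact h)
      rw [hMU ⟨j, hj⟩ ⟨i, hi⟩]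
      exact this
    · rw [hMUdef]; simp [hj]
  -- expansion of v in gs with MU coefficients
  have hvsum : ∀ j : Fin d, v j = ∑ i : Fin d, MU j.1 i.1 • gs i := by
    intro j
    have e1 : ∑ i : Fin d, MU j.1 i.1 • gs i = ∑ i ∈ Finset.Iic j, MU j.1 i.1 • gs i := by
      refine (Finset.sum_subset (Finset.subset_univ _) ?_).symm
      intro i _ hi
      rw [hMUz j i (by simpa using hi), zero_smul]
    rw [e1, ← Finset.Iio_insert, Finset.sum_insert (by simp), hMUself j, one_smul]
    conv_lhs => rw [hexp j]
    congr 1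
    refine Finset.sum_congr rfl fun i hi => ?_
    rw [hMU j i, real_inner_comm (v j) (gs i), real_inner_self_eq_norm_sq]
  -- Gram norm decay
  have hstep : ∀ i : ℕ, i + 1 < d → Gn i ≤ 2 * Gn (i+1) := by
    intro i hi
    have hi' : i < d := by omega
    have h1 := hlll i hi hi'
    set c := ⟪v ⟨i+1, hi⟩, gs ⟨i, hi'⟩⟫ / ⟪gs ⟨i, hi'⟩, gs ⟨i, hi'⟩⟫ with hc
    have h2 : ⟪gs ⟨i, hi'⟩, gs ⟨i+1, hi⟩⟫ = 0 := by
      refine horth _ _ ?_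
      simp only [ne_eq, Fin.mk.injEq]
      omega
    have h3 : |c| ≤ 1/2 := hμ ⟨i+1, hi⟩ ⟨i, hi'⟩ (by simp [Fin.lt_def])
    have h4 : ‖c • gs ⟨i, hi'⟩ + gs ⟨i+1, hi⟩‖^2
        = c^2 * ‖gs ⟨i, hi'⟩‖^2 + ‖gs ⟨i+1, hi⟩‖^2 := by
      rw [norm_add_sq_real, real_inner_smul_left, h2, mul_zero, norm_smul]
      simp [Real.norm_eq_abs, mul_pow, sq_abs]
    rw [h4] at h1
    have hc2 : c^2 ≤ 1/4 := by nlinarith [sq_abs c, abs_nonneg c]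
    rw [← hGn i hi', ← hGn (i+1) hi]
    nlinarith [sq_nonneg ‖gs ⟨i, hi'⟩‖,
      mul_nonneg (show (0:ℝ) ≤ 1/4 - c^2 by linarith) (sq_nonneg ‖gs ⟨i, hi'⟩‖)]
  have hchain : ∀ q p : ℕ, p ≤ q → q < d → Gn p ≤ 2^(q-p) * Gn q := by
    intro q
    induction q with
    | zero =>
      intro p hp _
      have : p = 0 := by omega
      subst this; simp
    | succ n ih =>
      intro p hp hq
      rcases Nat.lt_or_ge p (n+1) with h | h
      · have h1 : Gn p ≤ 2^(n-p) * Gn n := ih p (by omega) (by omega)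
        have h2 : Gn n ≤ 2 * Gn (n+1) := hstep n hq
        have h3 : (0:ℝ) < 2^(n-p) := by positivity
        calc Gn p ≤ 2^(n-p) * Gn n := h1
          _ ≤ 2^(n-p) * (2 * Gn (n+1)) := by nlinarith
          _ = 2^(n+1-p) * Gn (n+1) := by
              rw [show n+1-p = (n-p)+1 by omega, pow_succ]; ring
      · have : p = n+1 := by omega
        subst this; simp
  -- the dual vector w
  set K := k.1 with hK
  have hKd : K < d := k.2
  obtain ⟨w, hwdef⟩ : ∃ w : EuclideanSpace ℝ (Fin d),
      w = ∑ i : Fin d, (coefAux K MU i.1 / Gn i.1) • gs i := ⟨_, rfl⟩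
  have hvw : ∀ j : Fin d, ⟪v j, w⟫ = ∑ i : Fin d, coefAux K MU i.1 * MU j.1 i.1 := by
    intro j
    rw [hwdef, hinnersum]
    refine Finset.sum_congr rfl fun i _ => ?_
    rw [hMU j i, hip i]
    have hne0 : Gn i.1 ≠ 0 := (hGnpos i.1).ne'
    field_simp
  have hwk : ⟪v k, w⟫ = 1 := by
    rw [hvw k]
    rw [Finset.sum_eq_single k]
    · rw [hMUself k, coefAux_self, one_mul]
    · intro i _ hik
      rcases Ne.lt_or_gt hik with h | h
      · rw [coefAux_lt MU (show i.1 < K from h), zero_mul]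
      · rw [hMUz k i h, mul_zero]
    · intro h; exact absurd (Finset.mem_univ k) h
  have hwj : ∀ j : Fin d, j ≠ k → ⟪v j, w⟫ = 0 := by
    intro j hj
    rw [hvw j]
    rw [Fin.sum_univ_eq_sum_range (fun t => coefAux K MU t * MU j.1 t) d]
    rcases Ne.lt_or_gt hj with h | h
    · refine Finset.sum_eq_zero fun i hi => ?_
      rcases lt_or_ge i K with h2 | h2
      · rw [coefAux_lt MU h2, zero_mul]
      · have hid : i < d := Finset.mem_range.mp hi
        have hjk : (j:ℕ) < K := h
        have : MU j.1 i = 0 := hMUz j ⟨i, hid⟩ (by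
          simp only [Fin.lt_def]
          omega)
        rw [this, mul_zero]
    · have hj1 : K < j.1 := h
      rw [← Finset.sum_range_add_sum_Ico _ (show j.1+1 ≤ d from j.2), Finset.sum_range_succ]
      have t1 : ∑ i ∈ Finset.range j.1, coefAux K MU i * MU j.1 i = -coefAux K MU j.1 := by
        have h0 := coefAux_gt MU hj1
        rw [h0, neg_neg]
      have t2 : MU j.1 j.1 = 1 := hMUself j
      have t3 : ∑ i ∈ Finset.Ico (j.1+1) d, coefAux K MU i * MU j.1 i = 0 := by
        refine Finset.sum_eq_zero fun i hi => ?_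
        have hi2 := Finset.mem_Ico.mp hi
        have : MU j.1 i = 0 := hMUz j ⟨i, hi2.2⟩ (Fin.lt_def.mpr (show (j:ℕ) < i by omega))
        rw [this, mul_zero]
      rw [t1, t2, t3, mul_one]
      ring
  have huw : ⟪u, w⟫ = 0 := by
    induction hu using Submodule.span_induction with
    | mem x hx =>
      obtain ⟨j, hj, rfl⟩ := hx
      exact hwj j hj
    | zero => exact inner_zero_left w
    | add x y hx hy ihx ihy => rw [inner_add_left, ihx, ihy, add_zero]
    | smul a x hx ih => rw [real_inner_smul_left, ih, mul_zero]
  have hwne : w ≠ 0 := by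
    intro h0
    rw [h0, inner_zero_right] at hwk
    norm_num at hwk
  have hwpos : 0 < ‖w‖ := norm_pos_iff.mpr hwne
  -- norm of w
  set M := d - 1 - K with hM
  have hdKM : d - K = M + 1 := by omega
  have hwnormsq : ‖w‖^2 ≤ (9/2:ℝ)^M / Gn K := by
    have e1 : ‖w‖^2 = ∑ i : Fin d, (coefAux K MU i.1)^2 / Gn i.1 := by
      rw [hwdef, hnormsum]
      refine Finset.sum_congr rfl fun i _ => ?_
      rw [hGn' i, div_pow]
      field_simp [(hGnpos i.1).ne']
    have e2 : ∀ i : Fin d, (coefAux K MU i.1)^2 / Gn i.1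
        ≤ (coefAux K MU i.1)^2 * 2^(i.1-K) / Gn K := by
      intro i
      rcases lt_or_ge i.1 K with h | h
      · rw [coefAux_lt MU h]
        simp
      · have hc := hchain i.1 K h i.2
        rw [div_le_div_iff₀ (hGnpos i.1) (hGnpos K)]
        have h2 : (0:ℝ) ≤ (coefAux K MU i.1)^2 := sq_nonneg _
        nlinarith [hGnpos i.1, hGnpos K]
    have e3 : ∑ i : Fin d, (coefAux K MU i.1)^2 * 2^(i.1-K) / Gn K
        = (∑ i ∈ Finset.range d, (coefAux K MU i)^2 * 2^(i-K)) / Gn K := by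
      rw [Finset.sum_div]
      exact Fin.sum_univ_eq_sum_range (fun t => (coefAux K MU t)^2 * 2^(t-K) / Gn K) d
    have e4 : ∑ i ∈ Finset.range d, (coefAux K MU i)^2 * (2:ℝ)^(i-K) ≤ (9/2:ℝ)^M := by
      rw [← Finset.sum_range_add_sum_Ico _ hKd.le]
      have z1 : ∑ i ∈ Finset.range K, (coefAux K MU i)^2 * (2:ℝ)^(i-K) = 0 :=
        Finset.sum_eq_zero fun i hi => by
          rw [coefAux_lt MU (Finset.mem_range.mp hi)]
          simp
      rw [z1, zero_add, Finset.sum_Ico_eq_sum_range, hdKM, Finset.sum_range_succ']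
      have z2 : (coefAux K MU (K + 0))^2 * (2:ℝ)^(K + 0 - K) = 1 := by
        simp [coefAux_self]
      rw [z2]
      have z3 : ∑ t ∈ Finset.range M, (coefAux K MU (K + (t+1)))^2 * (2:ℝ)^(K + (t+1) - K)
          ≤ ∑ t ∈ Finset.range M, (1/2:ℝ) * (9/2)^t := by
        refine Finset.sum_le_sum fun t _ => ?_
        have hb := coefAux_abs_le K MU hMUb (K + (t+1)) (by omega)
        rw [show K + (t+1) - K - 1 = t by omega] at hb
        have h9 : ((3/2:ℝ)^t)^2 = (9/4:ℝ)^t := by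
          rw [show (9/4:ℝ) = (3/2)^2 by norm_num, ← pow_mul, ← pow_mul, mul_comm t 2]
        have hb2 : (coefAux K MU (K + (t+1)))^2 ≤ (1/4) * (9/4:ℝ)^t := by
          calc (coefAux K MU (K + (t+1)))^2 = |coefAux K MU (K + (t+1))|^2 :=
                (sq_abs _).symm
            _ ≤ (1/2 * (3/2:ℝ)^t)^2 := by
                exact pow_le_pow_left₀ (abs_nonneg _) hb 2
            _ = (1/4) * (9/4:ℝ)^t := by rw [mul_pow, ← h9]; ring
        have he : K + (t+1) - K = t + 1 := by omega
        rw [he]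
        calc (coefAux K MU (K + (t+1)))^2 * (2:ℝ)^(t+1)
            ≤ ((1/4) * (9/4:ℝ)^t) * (2:ℝ)^(t+1) := by
              exact mul_le_mul_of_nonneg_right hb2 (by positivity)
          _ = (1/2:ℝ) * (9/2)^t := by
              rw [pow_succ, show (9/2:ℝ)^t = (9/4)^t * 2^t by rw [← mul_pow]; norm_num]
              ring
      have z4 : ∑ t ∈ Finset.range M, (1/2:ℝ) * (9/2)^t = ((9/2:ℝ)^M - 1) / 7 := by
        rw [← Finset.mul_sum, geom_sum_eq (by norm_num)]
        ring
      have z5 : (1:ℝ) ≤ (9/2:ℝ)^M := one_le_pow₀ (by norm_num)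
      nlinarith [z3.trans_eq z4]
    calc ‖w‖^2 = ∑ i : Fin d, (coefAux K MU i.1)^2 / Gn i.1 := e1
      _ ≤ ∑ i : Fin d, (coefAux K MU i.1)^2 * 2^(i.1-K) / Gn K := Finset.sum_le_sum fun i _ => e2 i
      _ = (∑ i ∈ Finset.range d, (coefAux K MU i)^2 * 2^(i-K)) / Gn K := e3
      _ ≤ (9/2:ℝ)^M / Gn K := by
          exact (div_le_div_iff_of_pos_right (hGnpos K)).mpr e4
  -- norm of v k
  have hvknorm : ‖v k‖^2 ≤ 2^K * Gn K := by
    obtain ⟨hh, hhdef⟩ : ∃ F : ℕ → ℝ, F = fun i =>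
        if i < K then (1/4) * 2^(K-i) * Gn K else if i = K then Gn K else 0 := ⟨_, rfl⟩
    have e1 : ‖v k‖^2 = ∑ i : Fin d, (MU K i.1)^2 * Gn i.1 := by
      conv_lhs => rw [hvsum k]
      rw [hnormsum]
      refine Finset.sum_congr rfl fun i _ => ?_
      rw [hGn' i]
    have e2 : ∀ i : Fin d, (MU K i.1)^2 * Gn i.1 ≤ hh i.1 := by
      intro i
      rcases lt_trichotomy i.1 K with h | h | h
      · simp only [hhdef, if_pos h]
        have hb : |MU K i.1| ≤ 1/2 := hMUb K i.1 h
        have hb2 : (MU K i.1)^2 ≤ 1/4 := by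
          nlinarith [sq_abs (MU K i.1), abs_nonneg (MU K i.1)]
        have hc : Gn i.1 ≤ 2^(K - i.1) * Gn K := hchain K i.1 h.le hKd
        nlinarith [mul_le_mul_of_nonneg_right hb2 (hGnpos i.1).le,
          mul_le_mul_of_nonneg_left hc (show (0:ℝ) ≤ 1/4 by norm_num)]
      · have hik : i = k := Fin.ext (by omega)
        have hm : MU K i.1 = 1 := by rw [hik]; exact hMUself k
        rw [hm, one_pow, one_mul]
        simp only [hhdef, if_neg (show ¬ (i:ℕ) < K by omega),
          if_pos (show (i:ℕ) = K by omega)]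
        rw [show (i:ℕ) = K by omega]
      · have hm : MU K i.1 = 0 := hMUz k i (Fin.lt_def.mpr h)
        rw [hm]
        simp only [hhdef]
        split_ifs
        · nlinarith [mul_pos (pow_pos (show (0:ℝ) < 2 by norm_num) (K - i.1)) (hGnpos K)]
        · nlinarith [hGnpos K]
        · nlinarith []
    have e3 : ∑ i : Fin d, hh i.1 = ∑ i ∈ Finset.range d, hh i :=
      Fin.sum_univ_eq_sum_range hh d
    have e4 : ∑ i ∈ Finset.range d, hh i = (1/4) * (2*((2:ℝ)^K - 1)) * Gn K + Gn K := by
      rw [← Finset.sum_range_add_sum_Ico _ hKd.le]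
      have p1 : ∑ i ∈ Finset.range K, hh i = (1/4) * (2*((2:ℝ)^K - 1)) * Gn K := by
        have q1 : ∀ i ∈ Finset.range K, hh i = (1/4) * (2:ℝ)^(K-i) * Gn K := fun i hi => by
          simp only [hhdef, if_pos (Finset.mem_range.mp hi)]
        rw [Finset.sum_congr rfl q1]
        have q2 : ∑ i ∈ Finset.range K, (1/4) * (2:ℝ)^(K-i) * Gn K
            = (1/4) * (∑ i ∈ Finset.range K, (2:ℝ)^(K-i)) * Gn K := by
          rw [Finset.mul_sum, Finset.sum_mul]
        rw [q2]
        have q3 : ∑ i ∈ Finset.range K, (2:ℝ)^(K-i) = ∑ i ∈ Finset.range K, (2:ℝ)^(i+1) := by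
          rw [← Finset.sum_range_reflect]
          refine Finset.sum_congr rfl fun i hi => ?_
          congr 1
          have := Finset.mem_range.mp hi; omega
        have q4 : ∑ i ∈ Finset.range K, (2:ℝ)^(i+1) = 2*((2:ℝ)^K - 1) := by
          simp_rw [pow_succ]
          rw [← Finset.sum_mul, geom_sum_eq (by norm_num)]
          ring
        rw [q3, q4]
      have p2 : ∑ i ∈ Finset.Ico K d, hh i = Gn K := by
        rw [Finset.sum_Ico_eq_sum_range, hdKM, Finset.sum_range_succ']
        have r1 : ∑ t ∈ Finset.range M, hh (K + (t+1)) = 0 :=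
          Finset.sum_eq_zero fun t _ => by
            simp only [hhdef, if_neg (show ¬ K + (t+1) < K by omega),
              if_neg (show ¬ K + (t+1) = K by omega)]
        have r2 : hh (K + 0) = Gn K := by
          simp [hhdef]
        rw [r1, r2, zero_add]
      rw [p1, p2]
    have e5 : (1/4) * (2*((2:ℝ)^K - 1)) * Gn K + Gn K ≤ 2^K * Gn K := by
      have h1 : (1:ℝ) ≤ 2^K := one_le_pow₀ (by norm_num)
      nlinarith [hGnpos K]
    calc ‖v k‖^2 = ∑ i : Fin d, (MU K i.1)^2 * Gn i.1 := e1
      _ ≤ ∑ i : Fin d, hh i.1 := Finset.sum_le_sum fun i _ => e2 i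
      _ = ∑ i ∈ Finset.range d, hh i := e3
      _ = (1/4) * (2*((2:ℝ)^K - 1)) * Gn K + Gn K := e4
      _ ≤ 2^K * Gn K := e5
  -- final assembly
  have hsq2 : ((Real.sqrt 2 / 3)^d)^2 = (2/9:ℝ)^d := by
    rw [← pow_mul, mul_comm d 2, pow_mul]
    congr 1
    rw [div_pow, Real.sq_sqrt (by norm_num : (0:ℝ) ≤ 2)]
    norm_num
  have hnn : (0:ℝ) ≤ (Real.sqrt 2 / 3)^d * ‖v k‖ := by positivity
  have key : (Real.sqrt 2 / 3)^d * ‖v k‖ * ‖w‖ ≤ 1 := by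
    have hsq : ((Real.sqrt 2 / 3)^d * ‖v k‖ * ‖w‖)^2 ≤ 1 := by
      have ex : ((Real.sqrt 2 / 3)^d * ‖v k‖ * ‖w‖)^2
          = (2/9:ℝ)^d * (‖v k‖^2 * ‖w‖^2) := by
        rw [mul_pow, mul_pow, hsq2]; ring
      rw [ex]
      have b1 : ‖v k‖^2 * ‖w‖^2 ≤ (2^K * Gn K) * ((9/2:ℝ)^M / Gn K) :=
        mul_le_mul hvknorm hwnormsq (sq_nonneg _) (mul_nonneg (by positivity) (hGnpos K).le)
      have b2 : ((2:ℝ)^K * Gn K) * ((9/2:ℝ)^M / Gn K) = 2^K * (9/2:ℝ)^M := by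
        have hg : Gn K ≠ 0 := (hGnpos K).ne'
        have e : ((2:ℝ)^K * Gn K) * ((9/2:ℝ)^M / Gn K)
            = ((2:ℝ)^K * (9/2:ℝ)^M) * (Gn K / Gn K) := by ring
        rw [e, div_self hg, mul_one]
      have b3 : (2/9:ℝ)^d * ((2:ℝ)^K * (9/2:ℝ)^M) ≤ 1 := by
        have hd : d = K + M + 1 := by omega
        have c1 : (2/9:ℝ)^M * (9/2:ℝ)^M = 1 := by
          rw [← mul_pow]; norm_num
        have c2 : (2/9:ℝ)^K * 2^K = (4/9:ℝ)^K := by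
          rw [← mul_pow]; norm_num
        have c3 : (4/9:ℝ)^K ≤ 1 := pow_le_one₀ (by norm_num) (by norm_num)
        have c4 : (0:ℝ) ≤ (4/9:ℝ)^K := by positivity
        calc (2/9:ℝ)^d * ((2:ℝ)^K * (9/2:ℝ)^M)
            = ((2/9:ℝ)^K * 2^K) * ((2/9:ℝ)^M * (9/2:ℝ)^M) * (2/9) := by
              rw [hd, pow_add, pow_add, pow_one]; ring
          _ = (4/9:ℝ)^K * (2/9) := by rw [c1, c2]; ring
          _ ≤ 1 := by nlinarith
      calc (2/9:ℝ)^d * (‖v k‖^2 * ‖w‖^2)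
          ≤ (2/9:ℝ)^d * (((2:ℝ)^K * Gn K) * ((9/2:ℝ)^M / Gn K)) :=
            mul_le_mul_of_nonneg_left b1 (by positivity)
        _ = (2/9:ℝ)^d * ((2:ℝ)^K * (9/2:ℝ)^M) := by rw [b2]
        _ ≤ 1 := b3
    nlinarith [mul_nonneg hnn (norm_nonneg w)]
  have hone : (1:ℝ) ≤ ‖v k - u‖ * ‖w‖ := by
    have h1 := real_inner_le_norm (v k - u) w
    rw [inner_sub_left, hwk, huw, sub_zero] at h1
    linarith
  have h2 : (Real.sqrt 2 / 3)^d * ‖v k‖ * ‖w‖ ≤ ‖v k - u‖ * ‖w‖ := key.trans hone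
  exact le_of_mul_le_mul_right h2 hwpos
end
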